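/- Let c be an acyclic edge coloring of G − ab and suppose F_a ∩ F_b = {α}, realized by an edge au with c(a,u) = α. If no candidate color for ab is valid, then every candidate color appears on an edge incident to u (other than au); in particular the number of candidate colors is at most d(u) − 1. -/

import Mathlib

/-- A proper edge coloring: edges sharing a vertex receive different colors. -/
def ProperEdgeColoring {V C : Type*} (G : SimpleGraph V) (c : Sym2 V → C) : Prop :=
  ∀ ⦃u v w : V⦄, G.Adj u v → G.Adj u w → v ≠ w → c s(u, v) ≠ c s(u, w)

/-- An acyclic edge coloring: a proper edge coloring with no bichromatic cycle. -/
def AcyclicEdgeColoring {V C : Type*} (G : SimpleGraph V) (c : Sym2 V → C) : Prop :=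
  ProperEdgeColoring G c ∧
    ∀ (v : V) (W : G.Walk v v), W.IsCycle →
      ¬ ∃ α β : C, ∀ e ∈ W.edges, c e = α ∨ c e = β

/-- `colorsAt G c x` (the set `F_x`): colors on edges of `G` incident with `x`. -/
def colorsAt {V C : Type*} (G : SimpleGraph V) (c : Sym2 V → C) (x : V) : Set C :=
  {γ | ∃ y, G.Adj x y ∧ c s(x, y) = γ}

/-- `S_{xy}`: colors on edges incident to `y` other than the edge `xy`. -/
def colorsAtOther {V C : Type*} (G : SimpleGraph V) (c : Sym2 V → C)
    (x y : V) : Set C :=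
  {γ | ∃ z, G.Adj y z ∧ z ≠ x ∧ c s(y, z) = γ}

/-!
Colour `ab` with a candidate `β`. The result is still proper, so if it is not acyclic there is
a cycle coloured with `β` and one other colour `δ`, and that cycle must use `ab`. The other
cycle edges at `a` and at `b` cannot be coloured `β`, since `β ∉ F_a ∪ F_b`; so they are both
coloured `δ`, which puts `δ` in `F_a ∩ F_b = {α}`. Properness at `a` then makes the cycle edge
at `a` the edge `au`, and the next cycle edge at `u` is coloured `β`. Distinct candidates are
thereby carried by distinct edges at `u` other than `au`.
-/

open SimpleGraph

namespace SimpleGraph.Walk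

variable {V : Type*} {G : SimpleGraph V}

theorem IsCycle.exists_ne_mem_edges {u v w : V} {W : G.Walk u u} (hW : W.IsCycle)
    (h : s(v, w) ∈ W.edges) : ∃ x, x ≠ w ∧ s(v, x) ∈ W.edges := by
  have htwo := hW.ncard_neighborSet_toSubgraph_eq_two (W.fst_mem_support_of_mem_edges h)
  obtain ⟨x, hx, hxw⟩ := (W.toSubgraph.neighborSet v).exists_ne_of_one_lt_ncard (by omega) w
  exact ⟨x, hxw, adj_toSubgraph_iff_mem_edges.mp hx⟩

end SimpleGraph.Walk

section Recoloring

variable {V C : Type*} [DecidableEq V] {G : SimpleGraph V} {c : Sym2 V → C} {a b : V} {β : C}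

theorem ProperEdgeColoring.update
    (hc : ProperEdgeColoring (G.deleteEdges {s(a, b)}) c)
    (hβ : β ∉ colorsAt (G.deleteEdges {s(a, b)}) c a ∪
      colorsAt (G.deleteEdges {s(a, b)}) c b) :
    ProperEdgeColoring G (Function.update c s(a, b) β) := by
  intro x y z hxy hxz hyz
  have off_ab : ∀ {y}, G.Adj x y → s(x, y) ≠ s(a, b) →
      (G.deleteEdges {s(a, b)}).Adj x y ∧ Function.update c s(a, b) β s(x, y) = c s(x, y) :=
    fun hxy hne => ⟨deleteEdges_adj.mpr ⟨hxy, hne⟩, Function.update_of_ne hne _ _⟩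
  have ne_β : ∀ {y z}, s(x, y) = s(a, b) → (G.deleteEdges {s(a, b)}).Adj x z →
      c s(x, z) ≠ β := by
    intro y z hab hxz hβz
    rcases Sym2.eq_iff.mp hab with ⟨rfl, -⟩ | ⟨rfl, -⟩
    exacts [hβ (Or.inl ⟨z, hxz, hβz⟩), hβ (Or.inr ⟨z, hxz, hβz⟩)]
  by_cases hy : s(x, y) = s(a, b) <;> by_cases hz : s(x, z) = s(a, b)
  · exact absurd (Sym2.congr_right.mp (hy.trans hz.symm)) hyz
  · obtain ⟨hxz', hz'⟩ := off_ab hxz hz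
    rw [hy, Function.update_self, hz']
    exact (ne_β hy hxz').symm
  · obtain ⟨hxy', hy'⟩ := off_ab hxy hy
    rw [hz, Function.update_self, hy']
    exact ne_β hz hxy'
  · rw [(off_ab hxy hy).2, (off_ab hxz hz).2]
    exact hc (off_ab hxy hy).1 (off_ab hxz hz).1 hyz

theorem AcyclicEdgeColoring.mem_edges_of_update {v : V} {γ δ : C}
    (hc : AcyclicEdgeColoring (G.deleteEdges {s(a, b)}) c) {W : G.Walk v v} (hW : W.IsCycle)
    (hcol : ∀ e ∈ W.edges,
      Function.update c s(a, b) β e = γ ∨ Function.update c s(a, b) β e = δ) :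
    s(a, b) ∈ W.edges := by
  by_contra hab
  have hoff : ∀ e ∈ W.edges, e ≠ s(a, b) := fun e he h => hab (h ▸ he)
  refine hc.2 v (W.toDeleteEdges {s(a, b)} hoff) (hW.transfer _) ⟨γ, δ, fun e he => ?_⟩
  simp only [Walk.toDeleteEdges, Walk.edges_transfer] at he
  simpa only [Function.update_of_ne (hoff e he)] using hcol e he

theorem exists_isCycle_of_not_acyclic_update
    (hc : AcyclicEdgeColoring (G.deleteEdges {s(a, b)}) c)
    (hβ : β ∉ colorsAt (G.deleteEdges {s(a, b)}) c a ∪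
      colorsAt (G.deleteEdges {s(a, b)}) c b)
    (hinvalid : ¬ AcyclicEdgeColoring G (Function.update c s(a, b) β)) :
    ∃ v, ∃ W : G.Walk v v, W.IsCycle ∧ s(a, b) ∈ W.edges ∧
      ∃ δ, ∀ e ∈ W.edges, e ≠ s(a, b) → c e = β ∨ c e = δ := by
  set c' := Function.update c s(a, b) β
  have hcycle : ¬ ∀ v (W : G.Walk v v), W.IsCycle →
      ¬ ∃ γ δ, ∀ e ∈ W.edges, c' e = γ ∨ c' e = δ :=
    fun h => hinvalid ⟨hc.1.update hβ, h⟩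
  simp only [not_forall, not_not] at hcycle
  obtain ⟨v, W, hW, γ, δ, hcol⟩ := hcycle
  have hab := hc.mem_edges_of_update hW hcol
  have hβab : c' s(a, b) = β := Function.update_self _ _ _
  obtain ⟨δ, hcol⟩ : ∃ δ, ∀ e ∈ W.edges, c' e = β ∨ c' e = δ := by
    rcases hcol _ hab with h | h <;> rw [hβab] at h <;> subst h
    exacts [⟨δ, hcol⟩, ⟨γ, fun e he => (hcol e he).symm⟩]
  exact ⟨v, W, hW, hab, δ, fun e he hne => Function.update_of_ne hne β c ▸ hcol e he⟩

theorem mem_colorsAtOther_of_not_acyclic_update {u : V} {α : C}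
    (hc : AcyclicEdgeColoring (G.deleteEdges {s(a, b)}) c)
    (hau : (G.deleteEdges {s(a, b)}).Adj a u) (hα : c s(a, u) = α)
    (hinter : colorsAt (G.deleteEdges {s(a, b)}) c a ∩
              colorsAt (G.deleteEdges {s(a, b)}) c b = {α})
    (hβ : β ∉ colorsAt (G.deleteEdges {s(a, b)}) c a ∪
      colorsAt (G.deleteEdges {s(a, b)}) c b)
    (hinvalid : ¬ AcyclicEdgeColoring G (Function.update c s(a, b) β)) :
    β ∈ colorsAtOther (G.deleteEdges {s(a, b)}) c a u := by
  set G' := G.deleteEdges {s(a, b)}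
  obtain ⟨v, W, hW, hab, δ, hcol⟩ := exists_isCycle_of_not_acyclic_update hc hβ hinvalid
  have cycle_edge : ∀ {x y}, s(x, y) ∈ W.edges → s(x, y) ≠ s(a, b) →
      G'.Adj x y ∧ (c s(x, y) = β ∨ c s(x, y) = δ) := fun he hne =>
    ⟨deleteEdges_adj.mpr ⟨W.adj_of_mem_edges he, hne⟩, hcol _ he hne⟩
  have hab_ne : a ≠ b := G.ne_of_adj (W.adj_of_mem_edges hab)
  have hu : u ≠ a ∧ u ≠ b := by
    obtain ⟨hau, hne⟩ := deleteEdges_adj.mp hau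
    exact ⟨hau.ne', by rintro rfl; exact hne rfl⟩
  obtain ⟨y, hyb, hay⟩ := hW.exists_ne_mem_edges hab
  obtain ⟨hG'ay, hcy⟩ := cycle_edge hay (by simp [hyb, hab_ne])
  replace hcy : c s(a, y) = δ := hcy.resolve_left fun h => hβ (Or.inl ⟨y, hG'ay, h⟩)
  obtain ⟨z, hza, hbz⟩ := hW.exists_ne_mem_edges (Sym2.eq_swap ▸ hab)
  obtain ⟨hG'bz, hcz⟩ := cycle_edge hbz (by simp [hza, hab_ne.symm])
  replace hcz : c s(b, z) = δ := hcz.resolve_left fun h => hβ (Or.inr ⟨z, hG'bz, h⟩)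
  have hδ : δ = α := by
    have hδ_mem : δ ∈ colorsAt G' c a ∩ colorsAt G' c b :=
      ⟨⟨y, hG'ay, hcy⟩, ⟨z, hG'bz, hcz⟩⟩
    rwa [hinter] at hδ_mem
  have hyu : y = u := by
    by_contra hne
    exact hc.1 hG'ay hau hne (by rw [hcy, hδ, hα])
  subst hyu
  obtain ⟨w, hwa, huw⟩ := hW.exists_ne_mem_edges (Sym2.eq_swap ▸ hay)
  obtain ⟨hG'uw, hcw⟩ := cycle_edge huw (by simp [hu.1, hu.2])
  refine ⟨w, hG'uw, hwa, hcw.resolve_right fun h => hc.1 hG'uw hau.symm hwa ?_⟩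
  rw [h, hδ, ← hα, Sym2.eq_swap]

end Recoloring

theorem ncard_le_degree_sub_one_of_subset_colorsAtOther {V C : Type*} {G H : SimpleGraph V}
    {u : V} [Fintype (G.neighborSet u)] {c : Sym2 V → C} {a : V} {S : Set C}
    (hHG : H ≤ G) (hua : G.Adj u a) (hS : S ⊆ colorsAtOther H c a u) :
    S.ncard ≤ G.degree u - 1 := by
  classical
  calc S.ncard ≤ (((G.neighborFinset u).erase a).image fun z => c s(u, z)).card := by
        rw [← Set.ncard_coe_finset]
        refine Set.ncard_le_ncard (fun γ hγ => ?_)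
        obtain ⟨z, huz, hza, rfl⟩ := hS hγ
        simpa using ⟨z, ⟨hHG huz, hza⟩, rfl⟩
    _ ≤ ((G.neighborFinset u).erase a).card := Finset.card_image_le
    _ = G.degree u - 1 := by
        rw [Finset.card_erase_of_mem ((mem_neighborFinset _ _ _).mpr hua),
          card_neighborFinset_eq_degree]

theorem candidates_through_common_neighbor_general
    {V χ : Type*} [Fintype V] [DecidableEq V]
    (G : SimpleGraph V) [DecidableRel G.Adj]
    (a b u : V)
    (c : Sym2 V → χ) (α : χ)
    (hc : AcyclicEdgeColoring (G.deleteEdges {s(a, b)}) c)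
    (hau : (G.deleteEdges {s(a, b)}).Adj a u) (hα : c s(a, u) = α)
    (hinter : colorsAt (G.deleteEdges {s(a, b)}) c a ∩
              colorsAt (G.deleteEdges {s(a, b)}) c b = {α})
    (hfail : ∀ β : χ,
      β ∉ colorsAt (G.deleteEdges {s(a, b)}) c a ∪
          colorsAt (G.deleteEdges {s(a, b)}) c b →
      ¬ AcyclicEdgeColoring G (Function.update c s(a, b) β)) :
    (∀ β : χ,
      β ∉ colorsAt (G.deleteEdges {s(a, b)}) c a ∪
          colorsAt (G.deleteEdges {s(a, b)}) c b →
      β ∈ colorsAtOther (G.deleteEdges {s(a, b)}) c a u) ∧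
    {β : χ | β ∉ colorsAt (G.deleteEdges {s(a, b)}) c a ∪
             colorsAt (G.deleteEdges {s(a, b)}) c b}.ncard ≤ G.degree u - 1 := by
  have hcandidates : ∀ β : χ,
      β ∉ colorsAt (G.deleteEdges {s(a, b)}) c a ∪ colorsAt (G.deleteEdges {s(a, b)}) c b →
      β ∈ colorsAtOther (G.deleteEdges {s(a, b)}) c a u := fun β hβ =>
    mem_colorsAtOther_of_not_acyclic_update hc hau hα hinter hβ (hfail β hβ)
  exact ⟨hcandidates, ncard_le_degree_sub_one_of_subset_colorsAtOther (deleteEdges_le _)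
    (deleteEdges_adj.mp hau).1.symm hcandidates⟩

/-- Let c be an acyclic edge coloring of G − ab with F_a ∩ F_b = {α}, realized by
an edge au with c(a,u) = α. If no candidate color for ab is valid, then every
candidate color appears at u on an edge other than au, and the number of
candidate colors is at most d(u) − 1. -/
theorem candidates_through_common_neighbor
    {V χ : Type*} [Fintype V] [Fintype χ] [DecidableEq V]
    (G : SimpleGraph V) [DecidableRel G.Adj]
    (a b u : V) (hab : G.Adj a b)
    (c : Sym2 V → χ) (α : χ)
    (hc : AcyclicEdgeColoring (G.deleteEdges {s(a, b)}) c)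
    (hau : (G.deleteEdges {s(a, b)}).Adj a u) (hα : c s(a, u) = α)
    (hinter : colorsAt (G.deleteEdges {s(a, b)}) c a ∩
              colorsAt (G.deleteEdges {s(a, b)}) c b = {α})
    (hfail : ∀ β : χ,
      β ∉ colorsAt (G.deleteEdges {s(a, b)}) c a ∪
          colorsAt (G.deleteEdges {s(a, b)}) c b →
      ¬ AcyclicEdgeColoring G (Function.update c s(a, b) β)) :
    (∀ β : χ,
      β ∉ colorsAt (G.deleteEdges {s(a, b)}) c a ∪
          colorsAt (G.deleteEdges {s(a, b)}) c b →
      β ∈ colorsAtOther (G.deleteEdges {s(a, b)}) c a u) ∧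
    {β : χ | β ∉ colorsAt (G.deleteEdges {s(a, b)}) c a ∪
             colorsAt (G.deleteEdges {s(a, b)}) c b}.ncard ≤ G.degree u - 1 :=
  candidates_through_common_neighbor_general G a b u c α hc hau hα hinter hfail
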